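/- Suppose X has a Lebesgue density f_X supported on [0,1]. Then for every s ∈ [−1,1], P(Z ≤ s) = (1/√2) ∫₀^{(1+s)/2} √((1+s−2x)/(1−x)) · f_X(x) dx. -/

import Mathlib

/-!
Conditionally on `X = x < 1`, the event `Z ≤ s` is `T² ≤ (1 + s - 2x) / (2(1 - x))`, which for `T`
uniform on `[-1, 1]` has probability `√((1 + s - 2x) / (1 - x)) / √2`; the bound is negative, and the
probability `0`, exactly when `x > (1 + s) / 2`. By independence, `P(Z ≤ s)` is the integral of this
conditional probability against the law `f_X(x) dx` of `X`.
-/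

open MeasureTheory ProbabilityTheory Set
open scoped ENNReal

lemma ProbabilityTheory.IndepFun.measure_preimage_eq_lintegral {Ω α β : Type*} [MeasurableSpace Ω]
    [MeasurableSpace α] [MeasurableSpace β] {P : Measure Ω} [IsFiniteMeasure P]
    {X : Ω → α} {T : Ω → β} (hX : Measurable X) (hT : Measurable T) (hXT : IndepFun X T P)
    {S : Set (α × β)} (hS : MeasurableSet S) :
    P ((fun ω ↦ (X ω, T ω)) ⁻¹' S) = ∫⁻ x, P.map T (Prod.mk x ⁻¹' S) ∂P.map X := by
  rw [← Measure.map_apply (hX.prodMk hT) hS,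
    (indepFun_iff_map_prod_eq_prod_map_map hX.aemeasurable hT.aemeasurable).mp hXT,
    Measure.prod_apply hS]

lemma uniform_Icc_measure_sq_le {c : ℝ} (hc : c ≤ 1) :
    ((2 : ℝ≥0∞)⁻¹ • volume.restrict (Icc (-1 : ℝ) 1)) {t | t ^ 2 ≤ c} = ENNReal.ofReal √c := by
  rcases lt_or_ge c 0 with hc0 | hc0
  · have hempty : {t : ℝ | t ^ 2 ≤ c} = ∅ :=
      eq_empty_of_forall_notMem fun t (ht : t ^ 2 ≤ c) ↦ by nlinarith [sq_nonneg t]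
    simp [hempty, Real.sqrt_eq_zero'.mpr hc0.le]
  · have hIcc : {t : ℝ | t ^ 2 ≤ c} = Icc (-√c) √c := by
      ext t
      exact Real.sq_le hc0
    have hsqrt : √c ≤ 1 := Real.sqrt_le_one.mpr hc
    rw [hIcc, Measure.smul_apply, Measure.restrict_apply measurableSet_Icc,
      inter_eq_left.mpr (Icc_subset_Icc (by linarith) hsqrt), Real.volume_Icc, smul_eq_mul,
      show √c - -√c = 2 * √c by ring, ENNReal.ofReal_mul zero_le_two, ENNReal.ofReal_ofNat,
      ← mul_assoc, ENNReal.inv_mul_cancel two_ne_zero ENNReal.ofNat_ne_top, one_mul]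

lemma uniform_Icc_measure_slice {s x : ℝ} (hs : s ≤ 1) (hx : x < 1) :
    ((2 : ℝ≥0∞)⁻¹ • volume.restrict (Icc (-1 : ℝ) 1))
        {t | t ^ 2 + (1 - t ^ 2) * (2 * x - 1) ≤ s} =
      ENNReal.ofReal (1 / √2 * √((1 + s - 2 * x) / (1 - x))) := by
  have hx' : 0 < 1 - x := by linarith
  have hslice : {t : ℝ | t ^ 2 + (1 - t ^ 2) * (2 * x - 1) ≤ s} =
      {t | t ^ 2 ≤ (1 + s - 2 * x) / (1 - x) / 2} := by
    ext t
    simp only [mem_ofPred_eq, div_div, le_div_iff₀ (by positivity : 0 < (1 - x) * 2)]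
    constructor <;> intro h <;> linarith
  rw [hslice, uniform_Icc_measure_sq_le (by rw [div_div, div_le_one (by positivity)]; linarith),
    Real.sqrt_div' _ zero_le_two, div_eq_inv_mul, one_div]

lemma ae_withDensity_lt_of_eq_zero_of_notMem_Icc {f : ℝ → ℝ} {a b : ℝ} (hf : Measurable f)
    (hsupp : ∀ x, x ∉ Icc a b → f x = 0) :
    ∀ᵐ x ∂volume.withDensity (fun x ↦ ENNReal.ofReal (f x)), x < b := by
  rw [ae_withDensity_iff hf.ennreal_ofReal]
  filter_upwards [Measure.ae_ne volume b] with x hxb hfx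
  by_contra! hx
  exact hfx (by simp [hsupp x fun h ↦ hxb (le_antisymm h.2 hx)])

lemma toReal_lintegral_ofReal_eq_intervalIntegral {g : ℝ → ℝ} {a b : ℝ} (hab : a ≤ b)
    (hg : Measurable g) (hg_nonneg : ∀ x, 0 ≤ g x) (hg_supp : ∀ x, x ∉ Icc a b → g x = 0) :
    (∫⁻ x, ENNReal.ofReal (g x)).toReal = ∫ x in a..b, g x := by
  rw [← integral_eq_lintegral_of_nonneg_ae (.of_forall hg_nonneg) hg.aestronglyMeasurable,
    ← setIntegral_eq_integral_of_forall_compl_eq_zero hg_supp, integral_Icc_eq_integral_Ioc,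
    intervalIntegral.integral_of_le hab]

lemma sqrt_ratio_mul_eq_zero_of_notMem {f : ℝ → ℝ} (hsupp : ∀ x, x ∉ Icc (0 : ℝ) 1 → f x = 0)
    {s x : ℝ} (hx : x ∉ Icc 0 ((1 + s) / 2)) :
    √((1 + s - 2 * x) / (1 - x)) * f x = 0 := by
  by_cases hx01 : x ∈ Icc (0 : ℝ) 1
  · have hx' : (1 + s) / 2 < x := by
      simp only [mem_Icc, not_and_or, not_le] at hx
      exact hx.resolve_left (by linarith [hx01.1])
    rw [Real.sqrt_eq_zero'.mpr (div_nonpos_of_nonpos_of_nonneg (by linarith) (by linarith [hx01.2])),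
      zero_mul]
  · rw [hsupp x hx01, mul_zero]

theorem cdf_of_Z
    {Ω : Type*} [MeasurableSpace Ω] (P : Measure Ω) [IsProbabilityMeasure P]
    (X T : Ω → ℝ) (hX : Measurable X) (hT : Measurable T)
    (hT_unif : Measure.map T P = (2 : ℝ≥0∞)⁻¹ • volume.restrict (Set.Icc (-1 : ℝ) 1))
    (hindep : ProbabilityTheory.IndepFun X T P)
    (fX : ℝ → ℝ) (hfX_meas : Measurable fX) (hfX_nonneg : ∀ x, 0 ≤ fX x)
    (hfX_supp : ∀ x, x ∉ Set.Icc (0 : ℝ) 1 → fX x = 0)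
    (hX_law : Measure.map X P = volume.withDensity fun x => ENNReal.ofReal (fX x))
    (s : ℝ) (hs : s ∈ Set.Icc (-1 : ℝ) 1) :
    (P {ω | T ω ^ 2 + (1 - T ω ^ 2) * (2 * X ω - 1) ≤ s}).toReal =
      (1 / Real.sqrt 2) *
        ∫ x in (0 : ℝ)..((1 + s) / 2), Real.sqrt ((1 + s - 2 * x) / (1 - x)) * fX x := by
  set F : ℝ → ℝ := fun x ↦ √((1 + s - 2 * x) / (1 - x))
  have hlaw : P {ω | T ω ^ 2 + (1 - T ω ^ 2) * (2 * X ω - 1) ≤ s} =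
      ∫⁻ x, P.map T {t | t ^ 2 + (1 - t ^ 2) * (2 * x - 1) ≤ s} ∂P.map X :=
    hindep.measure_preimage_eq_lintegral hX hT
      (S := {p | p.2 ^ 2 + (1 - p.2 ^ 2) * (2 * p.1 - 1) ≤ s})
      (measurableSet_le (by fun_prop) measurable_const)
  have hslices : ∀ᵐ x ∂P.map X, P.map T {t | t ^ 2 + (1 - t ^ 2) * (2 * x - 1) ≤ s} =
      ENNReal.ofReal (1 / √2 * F x) := by
    rw [hX_law, hT_unif]
    filter_upwards [ae_withDensity_lt_of_eq_zero_of_notMem_Icc hfX_meas hfX_supp] with x hx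
    exact uniform_Icc_measure_slice hs.2 hx
  have hdensity : ∀ x, ENNReal.ofReal (fX x) * ENNReal.ofReal (1 / √2 * F x) =
      ENNReal.ofReal (1 / √2 * (F x * fX x)) := fun x ↦ by
    rw [← ENNReal.ofReal_mul (hfX_nonneg x), mul_left_comm, mul_comm (fX x)]
  rw [hlaw, lintegral_congr_ae hslices, hX_law,
    lintegral_withDensity_eq_lintegral_mul _ hfX_meas.ennreal_ofReal (by fun_prop)]
  simp only [Pi.mul_apply, hdensity]
  rw [toReal_lintegral_ofReal_eq_intervalIntegral (a := 0) (b := (1 + s) / 2)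
      (by linarith [hs.1]) (by fun_prop)
      (fun x ↦ mul_nonneg (by positivity) (mul_nonneg (Real.sqrt_nonneg _) (hfX_nonneg x)))
      (fun x hx ↦ by rw [sqrt_ratio_mul_eq_zero_of_notMem hfX_supp hx, mul_zero]),
    intervalIntegral.integral_const_mul]
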